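/- arXiv:2209.02501 — 9 statements merged into one kernel-verified Lean document; each statement's English description precedes it below -/
import Mathlib

section
/- If 1/2 < H < 1, then the function ρ(x) = (1/2)((x+1)^{2H} - 2x^{2H} + (x-1)^{2H}) is completely monotone on (1,∞): it is smooth there and (-1)^n ρ^{(n)}(x) ≥ 0 for all n ≥ 0 and all x > 1. -/
open Set Real

/-- Derivative of the shifted power. -/
private lemma hasDerivAt_shift_rpow (a β x : ℝ) (h : x + a ≠ 0) :
    HasDerivAt (fun y : ℝ => (y + a) ^ β) (β * (x + a) ^ (β - 1)) x := by
  have h1 : HasDerivAt (fun y : ℝ => y + a) 1 x := (hasDerivAt_id x).add_const a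
  have h2 := (Real.hasDerivAt_rpow_const (p := β) (Or.inl h)).comp x h1
  simpa [Function.comp_def] using h2

private noncomputable def G (c α : ℝ) : ℝ → ℝ := fun x => c * ((x + 1) ^ α - 2 * x ^ α + (x - 1) ^ α)

private lemma hasDerivAt_G (c α x : ℝ) (hx : 1 < x) :
    HasDerivAt (G c α) (G (c * α) (α - 1) x) x := by
  have h1 : HasDerivAt (fun y : ℝ => (y + 1) ^ α) (α * (x + 1) ^ (α - 1)) x :=
    hasDerivAt_shift_rpow 1 α x (by linarith)
  have h0 : HasDerivAt (fun y : ℝ => (y + 0) ^ α) (α * (x + 0) ^ (α - 1)) x :=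
    hasDerivAt_shift_rpow 0 α x (by simpa using (by linarith : x ≠ 0))
  have h0' : HasDerivAt (fun y : ℝ => y ^ α) (α * x ^ (α - 1)) x := by
    simpa using h0
  have hm : HasDerivAt (fun y : ℝ => (y - 1) ^ α) (α * (x - 1) ^ (α - 1)) x := by
    have := hasDerivAt_shift_rpow (-1) α x (by linarith)
    simpa [sub_eq_add_neg] using this
  have : HasDerivAt (fun y : ℝ => c * ((y + 1) ^ α - 2 * y ^ α + (y - 1) ^ α))
      (c * (α * (x + 1) ^ (α - 1) - 2 * (α * x ^ (α - 1)) + α * (x - 1) ^ (α - 1))) x :=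
    (((h1.sub (h0'.const_mul 2)).add hm).const_mul c)
  convert this using 1
  · rfl
  simp only [G]; ring

/-- The coefficient sequence. -/
private def C (H : ℝ) : ℕ → ℝ
  | 0 => 1
  | n + 1 => C H n * (2 * H - n)

private lemma iteratedDeriv_rho (H : ℝ) (ρ : ℝ → ℝ)
    (hρ : ∀ x : ℝ, ρ x = (1/2) * ((x+1) ^ (2*H) - 2 * x ^ (2*H) + (x-1) ^ (2*H))) :
    ∀ n : ℕ, ∀ x ∈ Ioi (1:ℝ), iteratedDeriv n ρ x = G ((1/2) * C H n) (2 * H - n) x := by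
  intro n
  induction n with
  | zero =>
    intro x hx
    simp only [iteratedDeriv_zero, hρ x, G, C]
    norm_num
  | succ n ih =>
    intro x hx
    rw [iteratedDeriv_succ]
    have hev : iteratedDeriv n ρ =ᶠ[nhds x] G ((1/2) * C H n) (2 * H - n) :=
      Filter.eventuallyEq_of_mem (Ioi_mem_nhds hx) ih
    rw [hev.deriv_eq, (hasDerivAt_G _ _ x hx).deriv]
    have h1 : (1/2) * C H n * (2 * H - (n:ℝ)) = (1/2) * C H (n+1) := by
      simp [C]; ring
    rw [h1]
    congr 1
    push_cast
    ring

/-- Convexity of negative powers on `Ioi 0`. -/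
private lemma convexOn_rpow_neg {α : ℝ} (hα : α ≤ 0) :
    ConvexOn ℝ (Ioi (0:ℝ)) (fun x : ℝ => x ^ α) := by
  have hint : interior (Ioi (0:ℝ)) = Ioi 0 := interior_Ioi
  refine convexOn_of_hasDerivWithinAt2_nonneg (f' := fun x => α * x ^ (α - 1))
    (f'' := fun x => α * ((α - 1) * x ^ (α - 1 - 1))) (convex_Ioi 0) ?_ ?_ ?_ ?_
  · intro x hx
    exact (Real.continuousAt_rpow_const x α (Or.inl (ne_of_gt hx))).continuousWithinAt
  · intro x hx
    rw [hint] at hx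
    exact (Real.hasDerivAt_rpow_const (Or.inl (ne_of_gt hx))).hasDerivWithinAt
  · intro x hx
    rw [hint] at hx
    exact ((Real.hasDerivAt_rpow_const (p := α - 1)
      (Or.inl (ne_of_gt hx))).const_mul α).hasDerivWithinAt
  · intro x hx
    rw [hint] at hx
    have h1 : (0:ℝ) ≤ x ^ (α - 1 - 1) := Real.rpow_nonneg (le_of_lt hx) _
    show 0 ≤ α * ((α - 1) * x ^ (α - 1 - 1))
    nlinarith [mul_nonneg (mul_nonneg (neg_nonneg.2 hα)
      (show (0:ℝ) ≤ 1 - α by linarith)) h1]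

/-- Second difference nonneg for convex functions. -/
private lemma second_diff_nonneg {f : ℝ → ℝ} (hf : ConvexOn ℝ (Ioi (0:ℝ)) f)
    {x : ℝ} (hx : 1 < x) : 0 ≤ f (x + 1) - 2 * f x + f (x - 1) := by
  have hm : x - 1 ∈ Ioi (0:ℝ) := by simp; linarith
  have hp : x + 1 ∈ Ioi (0:ℝ) := by simp; linarith
  have h := hf.2 hm hp (by norm_num : (0:ℝ) ≤ 1/2) (by norm_num : (0:ℝ) ≤ 1/2)
    (by norm_num : (1/2:ℝ) + 1/2 = 1)
  have hmid : (1/2 : ℝ) • (x - 1) + (1/2 : ℝ) • (x + 1) = x := by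
    simp [smul_eq_mul]; ring
  rw [hmid] at h
  simp only [smul_eq_mul] at h
  linarith

private lemma second_diff_nonpos {f : ℝ → ℝ} (hf : ConcaveOn ℝ (Ioi (0:ℝ)) f)
    {x : ℝ} (hx : 1 < x) : f (x + 1) - 2 * f x + f (x - 1) ≤ 0 := by
  have h := second_diff_nonneg (f := fun y => -f y) hf.neg hx
  linarith

private lemma Csign (H : ℝ) (hH1 : 1/2 < H) (hH2 : H < 1) :
    ∀ m : ℕ, 0 ≤ (-1:ℝ)^(m+2) * C H (m+2) := by
  intro m
  induction m with
  | zero =>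
    show 0 ≤ (-1:ℝ)^2 * C H 2
    simp only [C]
    push_cast
    nlinarith
  | succ k ihk =>
    have hstep : C H (k+3) = C H (k+2) * (2*H - ((k+2:ℕ):ℝ)) := by
      rfl
    have hfac : 2*H - ((k+2:ℕ):ℝ) ≤ 0 := by push_cast; linarith
    have h1 : (-1:ℝ)^(k+3) = -(-1:ℝ)^(k+2) := by ring
    show 0 ≤ (-1:ℝ)^(k+3) * C H (k+3)
    rw [hstep, h1]
    nlinarith

theorem rho_completely_monotone (H : ℝ) (hH : H ∈ Set.Ioo (1/2 : ℝ) 1)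
    (ρ : ℝ → ℝ)
    (hρ : ∀ x : ℝ, ρ x = (1/2) * ((x+1) ^ (2*H) - 2 * x ^ (2*H) + (x-1) ^ (2*H))) :
    ContDiffOn ℝ (⊤ : ℕ∞) ρ (Set.Ioi (1:ℝ)) ∧
    ∀ (n : ℕ) (x : ℝ), 1 < x →
      0 ≤ (-1)^n * iteratedDerivWithin n ρ (Set.Ioi (1:ℝ)) x := by
  obtain ⟨hH1, hH2⟩ := hH
  have hsmooth : ContDiffOn ℝ (⊤ : ℕ∞) ρ (Set.Ioi (1:ℝ)) := by
    intro x hx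
    simp only [mem_Ioi] at hx
    have h1 : ContDiffAt ℝ (⊤ : ℕ∞) (fun y : ℝ => (y + 1) ^ (2*H)) x :=
      (Real.contDiffAt_rpow_const_of_ne (show x + 1 ≠ 0 by linarith)).comp x
        ((contDiff_id.add contDiff_const).contDiffAt)
    have h0 : ContDiffAt ℝ (⊤ : ℕ∞) (fun y : ℝ => y ^ (2*H)) x :=
      Real.contDiffAt_rpow_const_of_ne (show x ≠ 0 by linarith)
    have hm : ContDiffAt ℝ (⊤ : ℕ∞) (fun y : ℝ => (y - 1) ^ (2*H)) x :=
      (Real.contDiffAt_rpow_const_of_ne (show x - 1 ≠ 0 by linarith)).comp x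
        ((contDiff_id.sub contDiff_const).contDiffAt)
    have hρ' : ContDiffAt ℝ (⊤ : ℕ∞) ρ x := by
      have hform : ContDiffAt ℝ (⊤ : ℕ∞)
          (fun y : ℝ => (1/2) * ((y+1) ^ (2*H) - 2 * y ^ (2*H) + (y-1) ^ (2*H))) x :=
        ((h1.sub (contDiffAt_const.mul h0)).add hm).const_smul ((1:ℝ)/2)
      exact hform.congr_of_eventuallyEq (by filter_upwards with y; rw [hρ y])
    exact hρ'.contDiffWithinAt
  refine ⟨hsmooth, fun n x hx => ?_⟩
  have hmem : x ∈ Ioi (1:ℝ) := hx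
  have hW : iteratedDerivWithin n ρ (Set.Ioi (1:ℝ)) x = iteratedDeriv n ρ x := by
    rw [iteratedDerivWithin_eq_iteratedFDerivWithin, iteratedDeriv_eq_iteratedFDeriv,
      iteratedFDerivWithin_of_isOpen n isOpen_Ioi hmem]
  rw [hW, iteratedDeriv_rho H ρ hρ n x hmem]
  match n with
  | 0 =>
    simp only [pow_zero, one_mul, G, C]
    have hle : (1:ℝ) ≤ 2*H - ((0:ℕ):ℝ) := by push_cast; linarith
    have hc : ConvexOn ℝ (Ioi (0:ℝ)) (fun y : ℝ => y ^ (2*H - ((0:ℕ):ℝ))) :=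
      (convexOn_rpow hle).subset (Ioi_subset_Ici le_rfl) (convex_Ioi 0)
    have hd := second_diff_nonneg hc hx
    push_cast at hd ⊢
    linarith
  | 1 =>
    have h0 : (0:ℝ) ≤ 2*H - ((1:ℕ):ℝ) := by push_cast; linarith
    have h1 : 2*H - ((1:ℕ):ℝ) ≤ 1 := by push_cast; linarith
    have hcc : ConcaveOn ℝ (Ioi (0:ℝ)) (fun y : ℝ => y ^ (2*H - ((1:ℕ):ℝ))) :=
      (Real.concaveOn_rpow h0 h1).subset (Ioi_subset_Ici le_rfl) (convex_Ioi 0)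
    have hd := second_diff_nonpos hcc hx
    simp only [pow_one, G, C]
    push_cast at hd ⊢
    nlinarith [mul_nonneg (show (0:ℝ) ≤ 2*H by linarith) (neg_nonneg.2 hd)]
  | (m + 2) =>
    have hαneg : 2*H - ((m+2:ℕ):ℝ) ≤ 0 := by push_cast; linarith
    have hd := second_diff_nonneg (convexOn_rpow_neg hαneg) hx
    have hCsign : 0 ≤ (-1:ℝ)^(m+2) * C H (m+2) := Csign H hH1 hH2 m
    simp only [G]
    push_cast at hd hCsign ⊢
    nlinarith [mul_nonneg hCsign hd]
end

section
/- If 0 < H < 1/2, then the function -ρ, where ρ(x) = (1/2)((x+1)^{2H} - 2x^{2H} + (x-1)^{2H}), is completely monotone on (1,∞). -/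
open Set Real Filter

private lemma convexOn_rpow_neg_s4 {β : ℝ} (hβ : β ≤ 0) :
    ConvexOn ℝ (Set.Ioi (0:ℝ)) fun x : ℝ => x ^ β := by
  refine convexOn_of_hasDerivWithinAt2_nonneg (f' := fun x => β * x ^ (β - 1))
    (f'' := fun x => β * (β - 1) * x ^ (β - 2)) (convex_Ioi 0)
    (continuousOn_id.rpow_const fun x hx => Or.inl (ne_of_gt hx)) ?_ ?_ ?_
  · rw [interior_Ioi]
    intro x hx
    exact (Real.hasDerivAt_rpow_const (Or.inl (ne_of_gt hx))).hasDerivWithinAt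
  · rw [interior_Ioi]
    intro x hx
    have h := ((Real.hasDerivAt_rpow_const (p := β - 1) (Or.inl (ne_of_gt hx))).const_mul β)
    have he : β * ((β - 1) * x ^ (β - 1 - 1)) = β * (β - 1) * x ^ (β - 2) := by
      rw [show β - 1 - 1 = β - 2 by ring]; ring
    rw [he] at h
    exact h.hasDerivWithinAt
  · rw [interior_Ioi]
    intro x hx
    have hp : (0:ℝ) < x ^ (β - 2) := Real.rpow_pos_of_pos hx _
    show 0 ≤ β * (β - 1) * x ^ (β - 2)
    have hb : 0 ≤ β * (β - 1) := mul_nonneg_iff.mpr (Or.inr ⟨by linarith, by linarith⟩)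
    exact mul_nonneg hb hp.le

private lemma iter_formula (α : ℝ) (F : ℝ → ℝ)
    (hF : ∀ x : ℝ, F x = -(1/2) * ((x+1) ^ α - 2 * x ^ α + (x-1) ^ α)) :
    ∀ n : ℕ, ∀ x ∈ Set.Ioi (1:ℝ),
      iteratedDerivWithin n F (Set.Ioi 1) x =
        -(1/2) * (∏ k ∈ Finset.range n, (α - k)) *
          ((x+1) ^ (α - n) - 2 * x ^ (α - n) + (x-1) ^ (α - n)) := by
  intro n
  induction n with
  | zero =>
    intro x hx
    simp [hF x]
  | succ n ih =>
    intro x hx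
    have hx1 : (1:ℝ) < x := hx
    have hxp : (0:ℝ) < x := by linarith
    have hxp1 : (0:ℝ) < x + 1 := by linarith
    have hxm1 : (0:ℝ) < x - 1 := by linarith
    rw [iteratedDerivWithin_succ,
      derivWithin_of_isOpen isOpen_Ioi hx]
    have hev : iteratedDerivWithin n F (Set.Ioi 1) =ᶠ[nhds x]
        (fun y : ℝ => -(1/2) * (∏ k ∈ Finset.range n, (α - k)) *
          ((y+1) ^ (α - n) - 2 * y ^ (α - n) + (y-1) ^ (α - n))) :=
      Filter.eventually_of_mem (isOpen_Ioi.mem_nhds hx) (fun y hy => ih y hy)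
    rw [hev.deriv_eq]
    have h1 : HasDerivAt (fun y : ℝ => (y + 1) ^ (α - n))
        (1 * (α - n) * (x + 1) ^ (α - n - 1)) x :=
      ((hasDerivAt_id x).add_const 1).rpow_const (Or.inl hxp1.ne')
    have h2 : HasDerivAt (fun y : ℝ => y ^ (α - n))
        ((α - n) * x ^ (α - n - 1)) x :=
      Real.hasDerivAt_rpow_const (Or.inl hxp.ne')
    have h3 : HasDerivAt (fun y : ℝ => (y - 1) ^ (α - n))
        (1 * (α - n) * (x - 1) ^ (α - n - 1)) x :=
      ((hasDerivAt_id x).sub_const 1).rpow_const (Or.inl hxm1.ne')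
    have h : HasDerivAt (fun y : ℝ => -(1/2) * (∏ k ∈ Finset.range n, (α - k)) *
          ((y+1) ^ (α - n) - 2 * y ^ (α - n) + (y-1) ^ (α - n)))
        (-(1/2) * (∏ k ∈ Finset.range n, (α - k)) *
          (1 * (α - n) * (x + 1) ^ (α - n - 1) - 2 * ((α - n) * x ^ (α - n - 1))
            + 1 * (α - n) * (x - 1) ^ (α - n - 1))) x :=
      ((h1.sub (h2.const_mul 2)).add h3).const_mul _
    rw [h.deriv]
    rw [Finset.prod_range_succ,
      show α - ((n + 1 : ℕ) : ℝ) = α - n - 1 by push_cast; ring]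
    ring

private lemma sign_lemma (α : ℝ) (hα1 : α < 1) :
    ∀ m : ℕ, 0 ≤ α → 0 ≤ (-1:ℝ)^m * ∏ k ∈ Finset.range (m+1), (α - k) := by
  intro m
  induction m with
  | zero => intro h; simpa using h
  | succ m ih =>
    intro hα
    rw [Finset.prod_range_succ, pow_succ]
    have h1 : (0:ℝ) ≤ -(α - ((m+1 : ℕ) : ℝ)) := by
      push_cast
      have : (0:ℝ) ≤ (m:ℝ) := Nat.cast_nonneg m
      linarith
    have := mul_nonneg (ih hα) h1
    nlinarith [ih hα, h1]

theorem neg_rho_completely_monotone (H : ℝ) (hH : H ∈ Set.Ioo (0 : ℝ) (1/2))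
    (ρ : ℝ → ℝ)
    (hρ : ∀ x : ℝ, ρ x = (1/2) * ((x+1) ^ (2*H) - 2 * x ^ (2*H) + (x-1) ^ (2*H))) :
    ContDiffOn ℝ (⊤ : ℕ∞) (fun x => - ρ x) (Set.Ioi (1:ℝ)) ∧
    ∀ (n : ℕ) (x : ℝ), 1 < x →
      0 ≤ (-1)^n * iteratedDerivWithin n (fun x => - ρ x) (Set.Ioi (1:ℝ)) x := by
  obtain ⟨hH0, hH2⟩ := hH
  set α := 2 * H with hα
  have hα0 : 0 < α := by positivity
  have hα1 : α < 1 := by rw [hα]; linarith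
  have hfun : (fun x : ℝ => - ρ x)
      = fun x : ℝ => -(1/2) * ((x+1) ^ α - 2 * x ^ α + (x-1) ^ α) :=
    funext fun x => by rw [hρ x]; ring
  rw [hfun]
  constructor
  · intro x hx
    have hx1 : (1:ℝ) < x := hx
    have hxp : (0:ℝ) < x := by linarith
    have hxp1 : (0:ℝ) < x + 1 := by linarith
    have hxm1 : (0:ℝ) < x - 1 := by linarith
    have c1 : ContDiffAt ℝ (⊤ : ℕ∞) (fun y : ℝ => (y + 1) ^ α) x :=
      by have h := (Real.contDiffAt_rpow_const_of_ne (x := x + 1) (p := α) (n := (⊤ : ℕ∞)) hxp1.ne').comp x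
            (((contDiff_id.add contDiff_const).contDiffAt : ContDiffAt ℝ (⊤ : ℕ∞) (fun y : ℝ => y + 1) x))
         exact h
    have c2 : ContDiffAt ℝ (⊤ : ℕ∞) (fun y : ℝ => y ^ α) x :=
      Real.contDiffAt_rpow_const_of_ne hxp.ne'
    have c3 : ContDiffAt ℝ (⊤ : ℕ∞) (fun y : ℝ => (y - 1) ^ α) x :=
      by have h := (Real.contDiffAt_rpow_const_of_ne (x := x - 1) (p := α) (n := (⊤ : ℕ∞)) hxm1.ne').comp x
            (((contDiff_id.sub contDiff_const).contDiffAt : ContDiffAt ℝ (⊤ : ℕ∞) (fun y : ℝ => y - 1) x))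
         exact h
    exact ((contDiffAt_const.mul ((c1.sub (contDiffAt_const.mul c2)).add
      c3)).contDiffWithinAt)
  · intro n x hx
    have hx' : x ∈ Set.Ioi (1:ℝ) := hx
    have hxp : (0:ℝ) < x := by linarith
    have hxm1 : (0:ℝ) < x - 1 := by linarith
    have hxp1 : (0:ℝ) < x + 1 := by linarith
    rw [iter_formula α _ (fun x => rfl) n x hx']
    cases n with
    | zero =>
      have hcc := Real.concaveOn_rpow hα0.le hα1.le
      have hmem1 : x - 1 ∈ Set.Ici (0:ℝ) := by simp; linarith
      have hmem2 : x + 1 ∈ Set.Ici (0:ℝ) := by simp; linarith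
      have h := hcc.2 hmem1 hmem2 (by norm_num : (0:ℝ) ≤ 1/2)
        (by norm_num : (0:ℝ) ≤ 1/2) (by norm_num)
      simp only [smul_eq_mul] at h
      rw [show (1/2 : ℝ) * (x - 1) + (1/2 : ℝ) * (x + 1) = x by ring] at h
      simp only [pow_zero, Finset.range_zero, Finset.prod_empty, Nat.cast_zero, sub_zero]
      nlinarith
    | succ m =>
      have hcv := convexOn_rpow_neg_s4 (β := α - (m + 1 : ℕ))
        (by push_cast; have : (0:ℝ) ≤ (m:ℝ) := Nat.cast_nonneg m; linarith)
      have h := hcv.2 (Set.mem_Ioi.mpr hxm1) (Set.mem_Ioi.mpr hxp1)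
        (by norm_num : (0:ℝ) ≤ 1/2) (by norm_num : (0:ℝ) ≤ 1/2) (by norm_num)
      simp only [smul_eq_mul] at h
      rw [show (1/2 : ℝ) * (x - 1) + (1/2 : ℝ) * (x + 1) = x by ring] at h
      have hD : 0 ≤ (x+1) ^ (α - ((m+1:ℕ):ℝ)) - 2 * x ^ (α - ((m+1:ℕ):ℝ))
          + (x-1) ^ (α - ((m+1:ℕ):ℝ)) := by linarith
      have hP := sign_lemma α hα1 m hα0.le
      have key : ((-1:ℝ))^(m+1) * (-(1/2) * (∏ k ∈ Finset.range (m+1), (α - k)) *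
          ((x+1) ^ (α - ((m+1:ℕ):ℝ)) - 2 * x ^ (α - ((m+1:ℕ):ℝ))
            + (x-1) ^ (α - ((m+1:ℕ):ℝ))))
          = (1/2) * (((-1:ℝ))^m * (∏ k ∈ Finset.range (m+1), (α - k)) *
          ((x+1) ^ (α - ((m+1:ℕ):ℝ)) - 2 * x ^ (α - ((m+1:ℕ):ℝ))
            + (x-1) ^ (α - ((m+1:ℕ):ℝ)))) := by
        rw [pow_succ]; ring
      rw [key]
      have := mul_nonneg hP hD
      linarith
end

section
/- If 1/2 < H < 1, then the sequence ρ_k is strictly convex: ρ_{k-1} - ρ_k > ρ_k - ρ_{k+1} for all k ≥ 1. -/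
/-!
Write `ρ_k = Δ²f(k) / 2` with `f x = x ^ (2H)` and `Δ²f(x) = f (x + 1) - 2 f x + f (x - 1)`, so the
claim is `Δ²(Δ²f)(k) > 0`. For `k ≥ 2` all points lie in `[0, ∞)`, where `f` is smooth away from
`0` with fourth derivative `2H (2H - 1) (2H - 2) (2H - 3) x ^ (2H - 4) > 0`; hence `f''` is strictly
convex, so `Δ²f` (whose second derivative is `Δ²f''`) is strictly convex on `[1, ∞)`. For `k = 1`,
`ρ_0 = 1` is `Δ²g(0) / 2` for `g x = |x| ^ (2H)`, which is not smooth at `0`; there the claim is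
checked directly: it reduces to `4 · 2^a < 3^a + 7` for `a = 2H < 2`.
-/

open Set Real

def secondDiff (f : ℝ → ℝ) (x : ℝ) : ℝ := f (x + 1) - 2 * f x + f (x - 1)

lemma StrictConvexOn.secondDiff_pos {f : ℝ → ℝ} {s : Set ℝ} (hf : StrictConvexOn ℝ s f) {x : ℝ}
    (hxl : x - 1 ∈ s) (hxr : x + 1 ∈ s) : 0 < secondDiff f x := by
  have h := hf.2 hxl hxr (by linarith) (by norm_num : (0 : ℝ) < 1 / 2)
    (by norm_num : (0 : ℝ) < 1 / 2) (by norm_num)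
  simp only [smul_eq_mul] at h
  rw [show 1 / 2 * (x - 1) + 1 / 2 * (x + 1) = x by ring] at h
  unfold secondDiff
  linarith

lemma HasDerivAt.secondDiff {f f' : ℝ → ℝ} {x : ℝ} (hr : HasDerivAt f (f' (x + 1)) (x + 1))
    (h : HasDerivAt f (f' x) x) (hl : HasDerivAt f (f' (x - 1)) (x - 1)) :
    HasDerivAt (secondDiff f) (secondDiff f' x) x :=
  ((hr.comp_add_const x 1).sub (h.const_mul 2)).add (hl.comp_sub_const x 1)

lemma ContinuousOn.secondDiff {f : ℝ → ℝ} {c : ℝ} (hf : ContinuousOn f (Ici (c - 1))) :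
    ContinuousOn (secondDiff f) (Ici c) := by
  have shift : ∀ d, -1 ≤ d → ContinuousOn (fun x => f (x + d)) (Ici c) := fun d hd =>
    hf.comp (continuousOn_id.add continuousOn_const) fun x (hx : c ≤ x) =>
      show c - 1 ≤ x + d by linarith
  have h := ((shift 1 (by norm_num)).sub
    ((continuousOn_const (c := (2 : ℝ))).mul (shift 0 (by norm_num)))).add (shift (-1) le_rfl)
  simp only [add_zero, ← sub_eq_add_neg] at h
  exact h

theorem strictConvexOn_secondDiff {f f' f'' : ℝ → ℝ} {c : ℝ} (hf : ContinuousOn f (Ici (c - 1)))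
    (hf' : ∀ x, c - 1 < x → HasDerivAt f (f' x) x)
    (hf'' : ∀ x, c - 1 < x → HasDerivAt f' (f'' x) x)
    (hconv : StrictConvexOn ℝ (Ioi (c - 1)) f'') :
    StrictConvexOn ℝ (Ici c) (secondDiff f) := by
  refine strictConvexOn_of_deriv2_pos (convex_Ici c) hf.secondDiff fun x hx => ?_
  rw [interior_Ici, mem_Ioi] at hx
  have hderiv : deriv (secondDiff f) =ᶠ[nhds x] secondDiff f' :=
    Filter.eventually_of_mem (Ioi_mem_nhds hx) fun y (hy : c < y) =>
      (HasDerivAt.secondDiff (hf' _ (by linarith)) (hf' _ (by linarith))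
        (hf' _ (by linarith))).deriv
  rw [Function.iterate_succ_apply, Function.iterate_one, hderiv.deriv_eq,
    (HasDerivAt.secondDiff (hf'' _ (by linarith)) (hf'' _ (by linarith))
      (hf'' _ (by linarith))).deriv]
  exact hconv.secondDiff_pos (show c - 1 < x - 1 by linarith) (show c - 1 < x + 1 by linarith)

lemma strictConvexOn_iteratedDeriv_two_rpow {a : ℝ} (ha₁ : 1 < a) (ha₂ : a < 2) :
    StrictConvexOn ℝ (Ioi 0) (deriv^[2] fun x : ℝ => x ^ a) := by
  have hiter : ∀ k : ℕ, deriv^[k] (fun x : ℝ => x ^ a) =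
      fun x => (descPochhammer ℝ k).eval a * x ^ (a - k) :=
    fun k => funext (iter_deriv_rpow_const a · k)
  refine strictConvexOn_of_deriv2_pos' (convex_Ioi 0) (fun x (hx : 0 < x) => ?_) fun x hx => ?_
  · rw [hiter]
    exact ((continuousAt_id.rpow_const (Or.inl hx.ne')).const_mul _).continuousWithinAt
  · rw [← Function.iterate_add_apply, hiter]
    have hpoch : (descPochhammer ℝ 4).eval a = a * (a - 1) * ((2 - a) * (3 - a)) := by
      simp only [descPochhammer_succ_right, descPochhammer_zero, CharP.cast_eq_zero, sub_zero,
        one_mul, Nat.cast_one, Nat.cast_ofNat, Polynomial.eval_mul, Polynomial.eval_X,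
        Polynomial.eval_sub, Polynomial.eval_one, Polynomial.eval_ofNat]
      ring
    rw [hpoch]
    exact mul_pos (mul_pos (by nlinarith) (by nlinarith)) (rpow_pos_of_pos hx _)

theorem strictConvexOn_secondDiff_rpow {a : ℝ} (ha₁ : 1 < a) (ha₂ : a < 2) :
    StrictConvexOn ℝ (Ici 1) (secondDiff fun x => x ^ a) := by
  refine strictConvexOn_secondDiff (f' := deriv fun x : ℝ => x ^ a)
    (continuous_rpow_const (by linarith)).continuousOn
    (fun x _ => (differentiable_rpow_const ha₁.le x).hasDerivAt) (fun x hx => ?_)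
    (by simpa using strictConvexOn_iteratedDeriv_two_rpow ha₁ ha₂)
  have hx : x ≠ 0 := by linarith
  rw [deriv_rpow_const']
  exact ((hasDerivAt_rpow_const (Or.inl hx)).const_mul a).differentiableAt.hasDerivAt

/-- Equality holds at `a = 2`. With `E = 2 ^ (a - 2)` the claim reads
`16 E < 9 E (3/2) ^ (a - 2) + 7 E 2 ^ (2 - a)`; bounding both exponentials below by their tangent
lines at `a = 2` leaves `E (2 - a) (16 log 2 - 9 log 3) ≥ 0`, i.e. `3 ^ 9 ≤ 2 ^ 16`. -/
theorem four_mul_two_rpow_lt_three_rpow_add_seven {a : ℝ} (ha : a < 2) :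
    4 * (2 : ℝ) ^ a < 3 ^ a + 7 := by
  have hlog : 9 * log 3 ≤ 16 * log 2 := by
    have h : log ((3 : ℝ) ^ 9) ≤ log ((2 : ℝ) ^ 16) := log_le_log (by positivity) (by norm_num)
    rwa [log_pow, log_pow, Nat.cast_ofNat, Nat.cast_ofNat] at h
  set E := exp ((a - 2) * log 2) with hE
  have h2 : (2 : ℝ) ^ a = 4 * E := by
    rw [rpow_def_of_pos two_pos, hE, ← exp_log (show (0 : ℝ) < 4 by norm_num), ← exp_add]
    congr 1
    rw [show (4 : ℝ) = 2 ^ 2 by norm_num, log_pow]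
    ring
  have h3 : (3 : ℝ) ^ a = 9 * (E * exp ((a - 2) * (log 3 - log 2))) := by
    rw [rpow_def_of_pos three_pos, hE, ← exp_add, ← exp_log (show (0 : ℝ) < 9 by norm_num),
      ← exp_add]
    congr 1
    rw [show (9 : ℝ) = 3 ^ 2 by norm_num, log_pow]
    ring
  have h1 : 1 = E * exp (-((a - 2) * log 2)) := by rw [hE, ← exp_add, add_neg_cancel, exp_zero]
  have hE0 : 0 < E := exp_pos _
  have hl : 1 + (a - 2) * (log 3 - log 2) ≤ exp ((a - 2) * (log 3 - log 2)) := by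
    linarith [add_one_le_exp ((a - 2) * (log 3 - log 2))]
  have hr : 1 - (a - 2) * log 2 < exp (-((a - 2) * log 2)) := by
    have : -((a - 2) * log 2) ≠ 0 := by
      have := log_pos one_lt_two
      nlinarith
    linarith [add_one_lt_exp this]
  have hslope : 0 ≤ E * ((2 - a) * (16 * log 2 - 9 * log 3)) :=
    mul_nonneg hE0.le (mul_nonneg (by linarith) (by linarith))
  rw [h2, h3]
  nlinarith [mul_le_mul_of_nonneg_left hl hE0.le, mul_lt_mul_of_pos_left hr hE0]

theorem rho_convex_sequence (H : ℝ) (hH : H ∈ Set.Ioo (1/2 : ℝ) 1)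
    (ρ : ℕ → ℝ) (hρ0 : ρ 0 = 1)
    (hρ : ∀ k : ℕ, 1 ≤ k →
      ρ k = (1/2) * (((k:ℝ)+1) ^ (2*H) - 2 * (k:ℝ) ^ (2*H) + ((k:ℝ)-1) ^ (2*H))) :
    ∀ k : ℕ, 1 ≤ k → ρ (k-1) - ρ k > ρ k - ρ (k+1) := by
  obtain ⟨hH₁, hH₂⟩ := hH
  intro k hk
  obtain rfl | hk₂ : k = 1 ∨ 2 ≤ k := by omega
  · have h := four_mul_two_rpow_lt_three_rpow_add_seven (a := 2 * H) (by linarith)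
    rw [hρ0, hρ 1 le_rfl, hρ 2 (by norm_num)]
    norm_num [zero_rpow (show 2 * H ≠ 0 by linarith)]
    linarith
  · have hk₂' : (2 : ℝ) ≤ k := by exact_mod_cast hk₂
    have h := (strictConvexOn_secondDiff_rpow (a := 2 * H) (by linarith) (by linarith)).secondDiff_pos
      (x := k) (show (1 : ℝ) ≤ k - 1 by linarith) (show (1 : ℝ) ≤ k + 1 by linarith)
    have hcast : ((k - 1 : ℕ) : ℝ) = k - 1 := by rw [Nat.cast_sub hk, Nat.cast_one]
    rw [hρ (k - 1) (by omega), hρ k hk, hρ (k + 1) (by omega), hcast]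
    unfold secondDiff at h
    push_cast
    linarith
end

section
/- If 1/2 < H < 1, then the sequence ρ_k is strictly log-convex: ρ_{k-1} ρ_{k+1} > ρ_k^2 for all k ≥ 1. -/
/-!
Write `a = 2H ∈ (1, 2)`. For `k ≥ 1`, `2 ρ_k` is the second difference of `x ↦ x ^ a` at `k`, so
by Taylor's formula `ρ_k = a (a - 1) / 2 * ∫_{-1}^{1} (1 - |u|) (k + u) ^ (a - 2) du`. For `k ≥ 2`
all bases occurring in `ρ_{k-1}, ρ_k, ρ_{k+1}` are positive, and the pointwise log-convexity
`(x ^ (a - 2)) ^ 2 < (x - 1) ^ (a - 2) (x + 1) ^ (a - 2)` integrates, by a strict Cauchy–Schwarz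
inequality, to `ρ_k ^ 2 < ρ_{k-1} ρ_{k+1}`. For `k = 1`, where `ρ_0 = 1` is not an instance of the
formula, the claim reduces to `2 · 4 ^ t + 1 < 3 · 3 ^ t` with `t = 2H - 1 ∈ (0, 1)`: strict
concavity of `x ↦ x ^ t` at `3 = (2/3) · 4 + (1/3) · 1`.
-/

open Real Set intervalIntegral MeasureTheory

theorem integral_sub_mul_eq_sub_sub_mul {F F' F'' : ℝ → ℝ} {h : ℝ}
    (hF : ∀ u ∈ uIcc 0 h, HasDerivAt F (F' u) u) (hF'_cont : ContinuousOn F' (uIcc 0 h))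
    (hF' : ∀ u ∈ Ioo (min 0 h) (max 0 h), HasDerivAt F' (F'' u) u)
    (hF''_int : IntervalIntegrable F'' volume 0 h) :
    ∫ u in 0..h, (h - u) * F'' u = F h - F 0 - h * F' 0 := by
  have hcont : ContinuousOn (fun u => (h - u) * F' u + F u) (uIcc 0 h) :=
    ((continuousOn_const.sub continuousOn_id).mul hF'_cont).add
      fun u hu => (hF u hu).continuousAt.continuousWithinAt
  have hderiv : ∀ u ∈ Ioo (min 0 h) (max 0 h),
      HasDerivWithinAt (fun u => (h - u) * F' u + F u) ((h - u) * F'' u) (Ioi u) u := by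
    intro u hu
    have hdiff := (((hasDerivAt_id u).const_sub h).mul (hF' u hu)).add
      (hF u (Ioo_subset_Icc_self hu))
    exact (hdiff.congr_deriv (by simp only [id]; ring)).hasDerivWithinAt
  rw [integral_eq_sub_of_hasDeriv_right hcont hderiv
    (hF''_int.continuousOn_mul (continuousOn_const.sub continuousOn_id))]
  ring

theorem integral_one_sub_abs_mul_eq {F F' F'' : ℝ → ℝ}
    (hF : ∀ u ∈ Icc (-1 : ℝ) 1, HasDerivAt F (F' u) u) (hF'_cont : ContinuousOn F' (Icc (-1) 1))
    (hF' : ∀ u ∈ Ioo (-1 : ℝ) 1, HasDerivAt F' (F'' u) u)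
    (hF''_int : IntervalIntegrable F'' volume (-1) 1) :
    ∫ u in (-1 : ℝ)..1, (1 - |u|) * F'' u = F 1 - 2 * F 0 + F (-1) := by
  have taylor : ∀ h ∈ Icc (-1 : ℝ) 1,
      ∫ u in 0..h, (h - u) * F'' u = F h - F 0 - h * F' 0 := fun h hh => by
    have hsub : uIcc 0 h ⊆ Icc (-1) 1 := uIcc_subset_Icc (by norm_num) hh
    exact integral_sub_mul_eq_sub_sub_mul (fun u hu => hF u (hsub hu)) (hF'_cont.mono hsub)
      (fun u hu => hF' u <|
        Ioo_subset_Ioo (le_min (by norm_num) hh.1) (max_le (by norm_num) hh.2) hu)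
      (hF''_int.mono_set (by rwa [uIcc_of_le (by norm_num : (-1 : ℝ) ≤ 1)]))
  have hint : ∀ h ∈ Icc (-1 : ℝ) 1, IntervalIntegrable (fun u => (1 - |u|) * F'' u) volume 0 h :=
    fun h hh => (hF''_int.mono_set (by
      rw [uIcc_of_le (by norm_num : (-1 : ℝ) ≤ 1)]
      exact uIcc_subset_Icc (by norm_num) hh)).continuousOn_mul (by fun_prop)
  have h_left : ∫ u in (-1 : ℝ)..0, (1 - |u|) * F'' u = ∫ u in 0..(-1 : ℝ), (-1 - u) * F'' u := by
    rw [integral_symm, ← intervalIntegral.integral_neg]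
    refine integral_congr fun u hu => ?_
    rw [uIcc_of_ge (by norm_num)] at hu
    simp only [abs_of_nonpos hu.2]
    ring
  have h_right : ∫ u in (0 : ℝ)..1, (1 - |u|) * F'' u = ∫ u in (0 : ℝ)..1, (1 - u) * F'' u := by
    refine integral_congr fun u hu => ?_
    rw [uIcc_of_le (by norm_num)] at hu
    simp only [abs_of_nonneg hu.1]
  rw [← integral_add_adjacent_intervals (hint (-1) (by norm_num)).symm (hint 1 (by norm_num)),
    h_left, h_right, taylor (-1) (by norm_num), taylor 1 (by norm_num)]
  ring

theorem intervalIntegrable_add_rpow {r : ℝ} (hr : -1 < r) (c a b : ℝ) :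
    IntervalIntegrable (fun u => (c + u) ^ r) volume a b := by
  simpa using (intervalIntegrable_rpow' (a := c + a) (b := c + b) hr).comp_add_left c

theorem add_one_rpow_sub_two_mul_rpow_add_sub_one_rpow_eq_integral {a c : ℝ} (ha : 1 < a)
    (hc : 1 ≤ c) :
    (c + 1) ^ a - 2 * c ^ a + (c - 1) ^ a
      = a * (a - 1) * ∫ u in (-1 : ℝ)..1, (1 - |u|) * (c + u) ^ (a - 2) := by
  have hF : ∀ u, HasDerivAt (fun u => (c + u) ^ a) (a * (c + u) ^ (a - 1)) u := fun u =>
    (((hasDerivAt_id' u).const_add c).rpow_const (Or.inr ha.le)).congr_deriv (by simp)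
  have hF' : ∀ u ∈ Ioo (-1 : ℝ) 1,
      HasDerivAt (fun u => a * (c + u) ^ (a - 1)) (a * (a - 1) * (c + u) ^ (a - 2)) u :=
    fun u hu => ((((hasDerivAt_id' u).const_add c).rpow_const
      (Or.inl (by linarith [hu.1]))).const_mul a).congr_deriv (by norm_num; ring_nf)
  have hF'_cont : Continuous fun u => a * (c + u) ^ (a - 1) :=
    continuous_const.mul ((continuous_rpow_const (by linarith)).comp (continuous_const_add c))
  have := integral_one_sub_abs_mul_eq (fun u _ => hF u) hF'_cont.continuousOn hF'
    ((intervalIntegrable_add_rpow (by linarith) c (-1) 1).const_mul (a * (a - 1)))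
  simp only [add_zero, ← sub_eq_add_neg] at this
  rw [← this, ← intervalIntegral.integral_const_mul]
  exact integral_congr fun u _ => by ring

theorem sq_intervalIntegral_lt_mul_of_sq_lt_mul {f g h : ℝ → ℝ} {a b : ℝ} (hab : a < b)
    (hf : IntervalIntegrable f volume a b) (hg : IntervalIntegrable g volume a b)
    (hh : IntervalIntegrable h volume a b) (hf₀ : ∀ x ∈ Ioo a b, 0 ≤ f x)
    (hfgh : ∀ x ∈ Ioo a b, g x ^ 2 < f x * h x) :
    (∫ x in a..b, g x) ^ 2 < (∫ x in a..b, f x) * ∫ x in a..b, h x := by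
  have hf_pos : ∀ x ∈ Ioo a b, 0 < f x := fun x hx =>
    (hf₀ x hx).lt_of_ne fun h0 => by
      have := hfgh x hx
      rw [← h0, zero_mul] at this
      nlinarith [sq_nonneg (g x)]
  have hF : 0 < ∫ x in a..b, f x := intervalIntegral_pos_of_pos_on hf hf_pos hab
  set t := (∫ x in a..b, g x) / ∫ x in a..b, f x
  -- `f (t² f + h - 2 t g) = (t f - g)² + (f h - g²)`
  have hquad : 0 < ∫ x in a..b, (t ^ 2 * f x + h x - 2 * t * g x) := by
    refine intervalIntegral_pos_of_pos_on (((hf.const_mul _).add hh).sub (hg.const_mul _))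
      (fun x hx => ?_) hab
    nlinarith [sq_nonneg (t * f x - g x), hfgh x hx, hf_pos x hx,
      mul_pos (hf_pos x hx) (hf_pos x hx)]
  rw [integral_sub ((hf.const_mul _).add hh) (hg.const_mul _), integral_add (hf.const_mul _) hh,
    intervalIntegral.integral_const_mul, intervalIntegral.integral_const_mul] at hquad
  have ht : t * ∫ x in a..b, f x = ∫ x in a..b, g x := div_mul_cancel₀ _ hF.ne'
  nlinarith [mul_pos hF hquad]

theorem rpow_sq_lt_sub_one_rpow_mul_add_one_rpow {β x : ℝ} (hβ : β < 0) (hx : 1 < x) :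
    (x ^ β) ^ 2 < (x - 1) ^ β * (x + 1) ^ β := by
  rw [sq, ← mul_rpow (by linarith) (by linarith), ← mul_rpow (by linarith) (by linarith)]
  exact rpow_lt_rpow_of_neg (by nlinarith) (by nlinarith) hβ

theorem sq_integral_one_sub_abs_mul_add_rpow_lt {β c : ℝ} (hβ₁ : -1 < β) (hβ₀ : β < 0)
    (hc : 2 ≤ c) :
    (∫ u in (-1 : ℝ)..1, (1 - |u|) * (c + u) ^ β) ^ 2
      < (∫ u in (-1 : ℝ)..1, (1 - |u|) * (c - 1 + u) ^ β)
        * ∫ u in (-1 : ℝ)..1, (1 - |u|) * (c + 1 + u) ^ β := by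
  have hint : ∀ d, IntervalIntegrable (fun u => (1 - |u|) * (d + u) ^ β) volume (-1) 1 :=
    fun d => (intervalIntegrable_add_rpow hβ₁ d (-1) 1).continuousOn_mul (by fun_prop)
  refine sq_intervalIntegral_lt_mul_of_sq_lt_mul (by norm_num) (hint _) (hint _) (hint _)
    (fun u hu => mul_nonneg (by linarith [abs_lt.2 hu]) (rpow_nonneg (by linarith [hu.1]) _))
    fun u hu => ?_
  have hw : 0 < 1 - |u| := by linarith [abs_lt.2 hu]
  have hlc := rpow_sq_lt_sub_one_rpow_mul_add_one_rpow hβ₀ (by linarith [hu.1] : 1 < c + u)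
  rw [show c + u - 1 = c - 1 + u by ring, show c + u + 1 = c + 1 + u by ring] at hlc
  nlinarith [mul_lt_mul_of_pos_left hlc (pow_pos hw 2)]

theorem two_mul_four_rpow_add_one_lt {t : ℝ} (ht₀ : 0 < t) (ht₁ : t < 1) :
    2 * (4 : ℝ) ^ t + 1 < 3 * 3 ^ t := by
  have h : (2 / 3 : ℝ) • (4 : ℝ) ^ t + (1 / 3 : ℝ) • (1 : ℝ) ^ t
      < ((2 / 3 : ℝ) • (4 : ℝ) + (1 / 3 : ℝ) • (1 : ℝ)) ^ t :=
    (strictConcaveOn_rpow ht₀ ht₁).2 (by norm_num) (by norm_num) (by norm_num) (by norm_num)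
      (by norm_num) (by norm_num)
  norm_num [smul_eq_mul] at h
  linarith

theorem rho_log_convex_sequence (H : ℝ) (hH : H ∈ Set.Ioo (1/2 : ℝ) 1)
    (ρ : ℕ → ℝ) (hρ0 : ρ 0 = 1)
    (hρ : ∀ k : ℕ, 1 ≤ k →
      ρ k = (1/2) * (((k:ℝ)+1) ^ (2*H) - 2 * (k:ℝ) ^ (2*H) + ((k:ℝ)-1) ^ (2*H))) :
    ∀ k : ℕ, 1 ≤ k → ρ (k-1) * ρ (k+1) > (ρ k)^2 := by
  obtain ⟨hH₁, hH₂⟩ := hH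
  intro k hk
  obtain rfl | hk₂ : k = 1 ∨ 2 ≤ k := by omega
  · have hpow : ∀ x : ℝ, 0 < x → x ^ (2 * H) = x * x ^ (2 * H - 1) := fun x hx => by
      rw [← rpow_one_add' hx.le (by linarith), add_sub_cancel]
    have h₄ : (4 : ℝ) ^ (2 * H - 1) = 2 ^ (2 * H - 1) * 2 ^ (2 * H - 1) := by
      rw [← mul_rpow (by norm_num) (by norm_num)]; norm_num
    have key := two_mul_four_rpow_add_one_lt (t := 2 * H - 1) (by linarith) (by linarith)
    norm_num [hρ0, hρ, zero_rpow (by linarith : 2 * H ≠ 0)]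
    rw [hpow 2 two_pos, hpow 3 three_pos]
    linear_combination key / 2 - h₄
  · have hrep : ∀ j : ℕ, 1 ≤ j → ρ j = 2 * H * (2 * H - 1) / 2 *
        ∫ u in (-1 : ℝ)..1, (1 - |u|) * ((j : ℝ) + u) ^ (2 * H - 2) := fun j hj => by
      rw [hρ j hj, add_one_rpow_sub_two_mul_rpow_add_sub_one_rpow_eq_integral (by linarith)
        (by exact_mod_cast hj)]
      ring
    rw [hrep (k - 1) (by omega), hrep k hk, hrep (k + 1) (by omega), Nat.cast_sub hk]
    push_cast
    have hlc := sq_integral_one_sub_abs_mul_add_rpow_lt (c := k) (by linarith : -1 < 2 * H - 2)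
      (by linarith) (by exact_mod_cast hk₂)
    have hC : 0 < (2 * H * (2 * H - 1) / 2) ^ 2 := pow_pos (by nlinarith) 2
    linear_combination mul_lt_mul_of_pos_left hlc hC
end

section
/- If 1/2 < H < 1, then ρ_1^2 < ρ_3, i.e., (2^{2H-1} - 1)^2 < (1/2)(4^{2H} - 2·3^{2H} + 2^{2H}). -/
/-!
Put `a = 2H ∈ (1, 2)`. Since `4 ^ a = (2 ^ a) ^ 2` and `2 ^ (a - 1) = 2 ^ a / 2`, the inequality is
`0 < g a` for `g a = 4 ^ a - 4 * 3 ^ a + 6 * 2 ^ a - 4`, the fourth forward difference of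
`t ↦ t ^ a` at `0`. Now `g 1 = g 2 = 0`, and `g` is strictly concave on `[1, 2]`: dividing
`g'' a` by `3 ^ a`, the convex function `4 (4/3) ^ a + 6 (2/3) ^ a` is at most its value `88/9`
at `a = 2`, which reduces `g'' < 0` to `22 (log 2) ^ 2 < 9 (log 3) ^ 2`, i.e. to `2 ^ 11 < 3 ^ 7`.
-/

open Real Set

lemma hasDerivAt_log_pow_mul_rpow {b : ℝ} (hb : 0 < b) (n : ℕ) (x : ℝ) :
    HasDerivAt (fun x => log b ^ n * b ^ x) (log b ^ (n + 1) * b ^ x) x :=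
  ((hasStrictDerivAt_const_rpow hb x).hasDerivAt.const_mul (log b ^ n)).congr_deriv (by ring)

/-- The `n`-th derivative of `a ↦ 4 ^ a - 4 * 3 ^ a + 6 * 2 ^ a - 4 * 1 ^ a`; the `1 ^ a` term,
whose derivatives vanish, keeps this family closed under differentiation. -/
noncomputable def fourthDiffRpowDeriv (n : ℕ) (a : ℝ) : ℝ :=
  log 4 ^ n * 4 ^ a - 4 * (log 3 ^ n * 3 ^ a) + 6 * (log 2 ^ n * 2 ^ a) - 4 * (log 1 ^ n * 1 ^ a)

lemma hasDerivAt_fourthDiffRpowDeriv (n : ℕ) (a : ℝ) :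
    HasDerivAt (fourthDiffRpowDeriv n) (fourthDiffRpowDeriv (n + 1) a) a :=
  ((((hasDerivAt_log_pow_mul_rpow (by norm_num) n a).sub
    ((hasDerivAt_log_pow_mul_rpow (by norm_num) n a).const_mul 4)).add
    ((hasDerivAt_log_pow_mul_rpow (by norm_num) n a).const_mul 6)).sub
    ((hasDerivAt_log_pow_mul_rpow (by norm_num) n a).const_mul 4))

lemma iterate_deriv_fourthDiffRpowDeriv (m n : ℕ) :
    deriv^[m] (fourthDiffRpowDeriv n) = fourthDiffRpowDeriv (n + m) := by
  induction m generalizing n with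
  | zero => rfl
  | succ m ih =>
    rw [Function.iterate_succ_apply,
      funext fun a => (hasDerivAt_fourthDiffRpowDeriv n a).deriv, ih]
    ring_nf

lemma fourthDiffRpowDeriv_zero (a : ℝ) :
    fourthDiffRpowDeriv 0 a = 4 ^ a - 4 * 3 ^ a + 6 * 2 ^ a - 4 := by
  simp [fourthDiffRpowDeriv]

lemma four_mul_rpow_add_six_mul_rpow_le {a : ℝ} (ha : a ∈ Icc (1 : ℝ) 2) :
    4 * (4 / 3 : ℝ) ^ a + 6 * (2 / 3 : ℝ) ^ a ≤ 88 / 9 := by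
  have hconv : ConvexOn ℝ univ (fun x : ℝ => 4 * (4 / 3 : ℝ) ^ x + 6 * (2 / 3 : ℝ) ^ x) :=
    ((convexOn_rpow_left (by norm_num)).smul (by norm_num)).add
      ((convexOn_rpow_left (by norm_num)).smul (by norm_num))
  have := hconv.le_on_segment (mem_univ 1) (mem_univ 2)
    (by rwa [segment_eq_Icc (by norm_num)])
  norm_num at this
  linarith

lemma twentytwo_mul_log_two_sq_lt : 22 * log 2 ^ 2 < 9 * log 3 ^ 2 := by
  have h2 : 0 < log 2 := log_pos (by norm_num)
  have h : 11 * log 2 < 7 * log 3 := by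
    have := log_lt_log (by norm_num) (by norm_num : (2 : ℝ) ^ 11 < 3 ^ 7)
    simpa [log_pow] using this
  nlinarith

lemma fourthDiffRpowDeriv_two_neg {a : ℝ} (ha : a ∈ Icc (1 : ℝ) 2) :
    fourthDiffRpowDeriv 2 a < 0 := by
  have h43 : (4 : ℝ) ^ a = (4 / 3) ^ a * 3 ^ a := by
    rw [← mul_rpow (by norm_num) (by norm_num)]; norm_num
  have h23 : (2 : ℝ) ^ a = (2 / 3) ^ a * 3 ^ a := by
    rw [← mul_rpow (by norm_num) (by norm_num)]; norm_num
  have hlog4 : log 4 = 2 * log 2 := by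
    rw [show (4 : ℝ) = 2 ^ 2 by norm_num, log_pow]; push_cast; ring
  have h3 : 0 < (3 : ℝ) ^ a := by positivity
  have hbound := mul_le_mul_of_nonneg_left (four_mul_rpow_add_six_mul_rpow_le ha)
    (mul_nonneg (sq_nonneg (log 2)) h3.le)
  have hlog := twentytwo_mul_log_two_sq_lt
  simp only [fourthDiffRpowDeriv, log_one, h43, h23, hlog4]
  nlinarith

lemma strictConcaveOn_fourthDiffRpow :
    StrictConcaveOn ℝ (Icc 1 2) (fourthDiffRpowDeriv 0) := by
  refine strictConcaveOn_of_deriv2_neg (convex_Icc 1 2)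
    (fun a _ => (hasDerivAt_fourthDiffRpowDeriv 0 a).continuousAt.continuousWithinAt)
    fun a ha => ?_
  rw [iterate_deriv_fourthDiffRpowDeriv]
  exact fourthDiffRpowDeriv_two_neg (interior_subset ha)

lemma fourthDiffRpow_pos {a : ℝ} (ha : a ∈ Ioo (1 : ℝ) 2) : 0 < fourthDiffRpowDeriv 0 a := by
  have h := strictConcaveOn_fourthDiffRpow.lt_on_openSegment (left_mem_Icc.2 one_le_two)
    (right_mem_Icc.2 one_le_two) one_lt_two.ne (by rwa [openSegment_eq_Ioo one_lt_two])
  norm_num [fourthDiffRpowDeriv_zero] at h ⊢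
  exact h

theorem rho1_sq_lt_rho3 (H : ℝ) (hH : H ∈ Set.Ioo (1/2 : ℝ) 1) :
    ((2:ℝ) ^ (2*H-1) - 1)^2 < (1/2) * ((4:ℝ) ^ (2*H) - 2 * (3:ℝ) ^ (2*H) + (2:ℝ) ^ (2*H)) := by
  have hg := fourthDiffRpow_pos (a := 2 * H) ⟨by linarith [hH.1], by linarith [hH.2]⟩
  rw [fourthDiffRpowDeriv_zero] at hg
  have h4 : (4 : ℝ) ^ (2 * H) = (2 ^ (2 * H)) ^ 2 := by
    rw [sq, ← mul_rpow (by norm_num) (by norm_num)]; norm_num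
  have h2 : (2 : ℝ) ^ (2 * H - 1) = 2 ^ (2 * H) / 2 := by
    rw [rpow_sub two_pos, rpow_one]
  rw [h4] at hg
  rw [h2, h4]
  nlinarith
end

section
/- If 1/2 < H < 1, then the solution (Γ_3^2, Γ_3^3) of the system Γ_3^2 + Γ_3^3 ρ_1 = ρ_1, Γ_3^2 ρ_1 + Γ_3^3 = ρ_2 satisfies Γ_3^2 > Γ_3^3 > 0, where Γ_3^2 = ρ_1(1-ρ_2)/(1-ρ_1^2) and Γ_3^3 = (ρ_2-ρ_1^2)/(1-ρ_1^2). -/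
theorem gamma3_monotone_positive (H ρ₁ ρ₂ : ℝ) (hH : H ∈ Set.Ioo (1/2 : ℝ) 1)
    (h1 : ρ₁ = (2:ℝ) ^ (2*H-1) - 1)
    (h2 : ρ₂ = (1/2) * ((3:ℝ) ^ (2*H) - (2:ℝ) ^ (2*H+1) + 1)) :
    ρ₁ * (1 - ρ₂) / (1 - ρ₁^2) > (ρ₂ - ρ₁^2) / (1 - ρ₁^2) ∧
    (ρ₂ - ρ₁^2) / (1 - ρ₁^2) > 0 := by
  obtain ⟨hH1, hH2⟩ := hH
  set s : ℝ := 2*H - 1 with hs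
  have hs0 : 0 < s := by simp only [hs]; linarith
  have hs1 : s < 1 := by simp only [hs]; linarith
  set u : ℝ := (2:ℝ) ^ s with hu
  set v : ℝ := (3:ℝ) ^ s with hv
  have sc := Real.strictConcaveOn_rpow hs0 hs1
  have key1 : (1/3:ℝ) • ((1:ℝ)^s) + (2/3:ℝ) • ((4:ℝ)^s) <
      ((1/3:ℝ) • (1:ℝ) + (2/3:ℝ) • (4:ℝ)) ^ s :=
    sc.2 (by norm_num) (by norm_num) (by norm_num) (by norm_num) (by norm_num) (by norm_num)
  have key2 : (1/2:ℝ) • ((1:ℝ)^s) + (1/2:ℝ) • ((3:ℝ)^s) <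
      ((1/2:ℝ) • (1:ℝ) + (1/2:ℝ) • (3:ℝ)) ^ s :=
    sc.2 (by norm_num) (by norm_num) (by norm_num) (by norm_num) (by norm_num) (by norm_num)
  have h4 : (4:ℝ) ^ s = u * u := by
    rw [hu, ← Real.mul_rpow (by norm_num) (by norm_num)]; norm_num
  have e1 : (1/3:ℝ) • (1:ℝ) + (2/3:ℝ) • (4:ℝ) = 3 := by norm_num
  have e2 : (1/2:ℝ) • (1:ℝ) + (1/2:ℝ) • (3:ℝ) = 2 := by norm_num
  rw [e1] at key1
  rw [e2] at key2
  simp only [smul_eq_mul, Real.one_rpow, h4, ← hu, ← hv] at key1 key2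
  have hu1 : 1 < u := by
    have := Real.rpow_lt_rpow_of_exponent_lt (by norm_num : (1:ℝ) < 2) hs0
    rwa [Real.rpow_zero] at this
  have hu2 : u < 2 := by
    have := Real.rpow_lt_rpow_of_exponent_lt (by norm_num : (1:ℝ) < 2) hs1
    rwa [Real.rpow_one] at this
  have hexp1 : 2*H = s + 1 := by simp [hs]
  have hexp2 : 2*H + 1 = s + 2 := by simp [hs]; ring
  have hρ1 : ρ₁ = u - 1 := h1
  have hρ2 : ρ₂ = (1/2) * (v * 3 - u * 4 + 1) := by
    rw [h2, hexp1, Real.rpow_add (by norm_num : (0:ℝ) < 3) s 1,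
      Real.rpow_add (by norm_num : (0:ℝ) < 2) (s+1) 1,
      Real.rpow_add (by norm_num : (0:ℝ) < 2) s 1, Real.rpow_one, ← hv, ← hu]
    ring
  have hD : 0 < 1 - ρ₁^2 := by rw [hρ1]; nlinarith
  constructor
  · rw [gt_iff_lt, div_lt_div_iff_of_pos_right hD]
    rw [hρ1, hρ2]; nlinarith
  · apply div_pos _ hD
    rw [hρ1, hρ2]; nlinarith
end

section
/- As H ↑ 1, the quantity Γ_3^3 = (ρ_2 - ρ_1^2)/(1-ρ_1^2) with ρ_1 = 2^{2H-1}-1 and ρ_2 = (1/2)(3^{2H} - 2^{2H+1} + 1) converges to (8 log 16 - 9 log 9)/(8 log 4). -/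
/-! Both numerator and denominator are smooth in `H` and vanish at `H = 1`, where
`ρ₁ = 1` and `ρ₂ = 1`. Their quotient is therefore the quotient of difference slopes at `1`,
which tends to the quotient of the derivatives there, `(9 log 3 - 16 log 2) / (-8 log 2)`. -/

open Filter Topology Real

theorem tendsto_div_nhdsNE_of_hasDerivAt {f g : ℝ → ℝ} {f' g' a : ℝ}
    (hf : HasDerivAt f f' a) (hg : HasDerivAt g g' a) (hfa : f a = 0) (hga : g a = 0)
    (hg' : g' ≠ 0) : Tendsto (fun x => f x / g x) (𝓝[≠] a) (𝓝 (f' / g')) := by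
  refine ((hasDerivAt_iff_tendsto_slope.mp hf).div
    (hasDerivAt_iff_tendsto_slope.mp hg) hg').congr' ?_
  filter_upwards [self_mem_nhdsWithin] with x hx
  rw [Pi.div_apply, slope_def_field, slope_def_field, hfa, hga, sub_zero, sub_zero,
    div_div_div_cancel_right₀ (sub_ne_zero.mpr hx)]

theorem hasDerivAt_rho1_sq_at_one :
    HasDerivAt (fun H : ℝ => ((2:ℝ) ^ (2 * H - 1) - 1) ^ 2) (8 * log 2) 1 := by
  refine ((((hasDerivAt_id' (x := (1:ℝ))).const_mul 2).sub_const 1).const_rpow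
    two_pos |>.sub_const 1 |>.fun_pow 2).congr_deriv ?_
  norm_num
  ring

theorem hasDerivAt_gamma33_num_at_one :
    HasDerivAt (fun H : ℝ =>
        (1/2) * ((3:ℝ) ^ (2*H) - (2:ℝ) ^ (2*H+1) + 1) - ((2:ℝ) ^ (2*H-1) - 1)^2)
      (9 * log 3 - 16 * log 2) 1 := by
  have h3 := ((hasDerivAt_id' (x := (1:ℝ))).const_mul 2).const_rpow (a := 3) (by norm_num)
  have h2 := (((hasDerivAt_id' (x := (1:ℝ))).const_mul 2).add_const 1).const_rpow two_pos
  refine ((((h3.sub h2).add_const 1).const_mul (1/2)).sub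
    hasDerivAt_rho1_sq_at_one).congr_deriv ?_
  norm_num
  ring

theorem log_ratio_eq :
    (9 * log 3 - 16 * log 2) / -(8 * log 2) =
      (8 * log 16 - 9 * log 9) / (8 * log 4) := by
  have hlog2 : log 2 ≠ 0 := (log_pos one_lt_two).ne'
  rw [show (16:ℝ) = 2 ^ 4 by norm_num, show (9:ℝ) = 3 ^ 2 by norm_num,
    show (4:ℝ) = 2 ^ 2 by norm_num, log_pow, log_pow, log_pow]
  field_simp
  ring

theorem gamma33_limit :
    Filter.Tendsto (fun H : ℝ =>
        ((1/2) * ((3:ℝ) ^ (2*H) - (2:ℝ) ^ (2*H+1) + 1) - ((2:ℝ) ^ (2*H-1) - 1)^2) /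
          (1 - ((2:ℝ) ^ (2*H-1) - 1)^2))
      (nhdsWithin 1 (Set.Iio (1:ℝ)))
      (nhds ((8 * Real.log 16 - 9 * Real.log 9) / (8 * Real.log 4))) := by
  have hden := hasDerivAt_rho1_sq_at_one.const_sub 1
  have hden' : -(8 * log 2) ≠ 0 := neg_ne_zero.mpr (by positivity)
  have hlim := tendsto_div_nhdsNE_of_hasDerivAt hasDerivAt_gamma33_num_at_one hden
    (by norm_num) (by norm_num) hden'
  rw [log_ratio_eq] at hlim
  exact hlim.mono_left (nhdsLT_le_nhdsNE 1)
end

section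
/- If 1/2 < H < 1, then ρ_1 + ρ_1^2ρ_3 + ρ_1ρ_2^2 - ρ_2ρ_3 - ρ_1^3 - ρ_1ρ_2 > ρ_1^2ρ_2 - ρ_2^3 + ρ_1ρ_2ρ_3 - ρ_1^2 + ρ_2 - ρ_1ρ_3; equivalently, the difference equals (ρ_1-ρ_2)(1+ρ_3)(1-ρ_2) + (ρ_1^2-ρ_2^2)(1-ρ_1-ρ_2+ρ_3) > 0, so that Γ_4^2 > Γ_4^3. -/
/-!
With `u = 2 ^ H` and `v = 3 ^ H` the correlations are `2ρ₁ = u² - 2`, `2ρ₂ = v² - 2u² + 1` and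
`2ρ₃ = u⁴ - 2v² + u²`. The difference of the two numerators factors as
`(ρ₁ - ρ₂) ((1 + ρ₁)(1 + ρ₃) - (ρ₁ + ρ₂)²)` and the common denominator as
`(1 - ρ₂)(1 + ρ₂ - 2ρ₁²)`, where `4((1 + ρ₁)(1 + ρ₃) - (ρ₁ + ρ₂)²) = u⁶ - (v² - 1)²` and
`2(1 + ρ₂ - 2ρ₁²) = v² - (u² - 1)²`. These are positive because strict subadditivity of
`x ↦ x ^ H` gives `9 ^ H < 8 ^ H + 1` and `4 ^ H < 3 ^ H + 1`. Finally `ρ₁ < 1` as `4 ^ H < 4`, and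
`ρ₂ < ρ₁` is the strict concavity of `x ↦ x ^ (2H - 1)`: `1 + 3 ^ (2H - 1) < 2 ^ (2H)`.
-/

open Real

namespace Real

lemma rpow_add_lt_add_rpow {p x y : ℝ} (hx : 0 < x) (hy : 0 < y) (hp : p < 1) :
    (x + y) ^ p < x ^ p + y ^ p := by
  have weighted : ∀ {a b : ℝ}, 0 < a → 0 < b → a * (a + b) ^ (p - 1) < a ^ p := by
    intro a b ha hb
    calc a * (a + b) ^ (p - 1) < a * a ^ (p - 1) :=
          mul_lt_mul_of_pos_left (rpow_lt_rpow_of_neg ha (by linarith) (by linarith)) ha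
      _ = a ^ p := by rw [rpow_sub_one ha.ne', mul_div_cancel₀ _ ha.ne']
  calc (x + y) ^ p = x * (x + y) ^ (p - 1) + y * (x + y) ^ (p - 1) := by
        rw [← add_mul, rpow_sub_one (by positivity), mul_div_cancel₀ _ (by positivity)]
    _ < x ^ p + y ^ p := add_lt_add (weighted hx hy) (add_comm x y ▸ weighted hy hx)

lemma rpow_add_rpow_lt_two_mul_rpow_midpoint {p x y : ℝ} (hx : 0 ≤ x) (hy : 0 ≤ y) (hxy : x ≠ y)
    (hp₀ : 0 < p) (hp₁ : p < 1) : x ^ p + y ^ p < 2 * ((x + y) / 2) ^ p := by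
  have h := (strictConcaveOn_rpow hp₀ hp₁).2 (Set.mem_Ici.2 hx) (Set.mem_Ici.2 hy) hxy
    (show (0 : ℝ) < 1 / 2 by norm_num) (show (0 : ℝ) < 1 / 2 by norm_num) (by norm_num)
  simp only [smul_eq_mul] at h
  rw [show 1 / 2 * x + 1 / 2 * y = (x + y) / 2 by ring] at h
  linarith

lemma rpow_two_mul {x : ℝ} (hx : 0 ≤ x) (y : ℝ) : x ^ (2 * y) = (x ^ y) ^ 2 := by
  rw [mul_comm, ← rpow_mul_natCast hx]
  norm_num

end Real

section CorrelationBounds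

variable {H : ℝ}

lemma two_rpow_sq_lt_three_rpow_add_one (hH : H < 1) :
    ((2 : ℝ) ^ H) ^ 2 < 3 ^ H + 1 := by
  have h := rpow_add_lt_add_rpow (show (0 : ℝ) < 3 by norm_num) one_pos hH
  rw [rpow_pow_comm (by norm_num)]
  norm_num at h ⊢
  exact h

lemma three_rpow_sq_lt_two_rpow_cube_add_one (hH : H < 1) :
    ((3 : ℝ) ^ H) ^ 2 < ((2 : ℝ) ^ H) ^ 3 + 1 := by
  have h := rpow_add_lt_add_rpow (show (0 : ℝ) < 8 by norm_num) one_pos hH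
  rw [rpow_pow_comm (by norm_num), rpow_pow_comm (by norm_num)]
  norm_num at h ⊢
  exact h

lemma three_rpow_sq_add_three_lt (hH₀ : 1 / 2 < H) (hH₁ : H < 1) :
    ((3 : ℝ) ^ H) ^ 2 + 3 < 3 * ((2 : ℝ) ^ H) ^ 2 := by
  have h := rpow_add_rpow_lt_two_mul_rpow_midpoint (x := 1) (y := 3) (p := 2 * H - 1)
    (by norm_num) (by norm_num) (by norm_num) (by linarith) (by linarith)
  rw [one_rpow, rpow_sub_one (by norm_num), rpow_sub_one (by norm_num)] at h
  rw [← rpow_two_mul (by norm_num), ← rpow_two_mul (by norm_num)]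
  norm_num at h
  linarith

end CorrelationBounds

section GammaAlgebra

variable (ρ₁ ρ₂ ρ₃ : ℝ)

lemma gamma_numerator_sub_eq :
    (ρ₁ + ρ₁^2*ρ₃ + ρ₁*ρ₂^2 - ρ₂*ρ₃ - ρ₁^3 - ρ₁*ρ₂)
      - (ρ₁^2*ρ₂ - ρ₂^3 + ρ₁*ρ₂*ρ₃ - ρ₁^2 + ρ₂ - ρ₁*ρ₃)
      = (ρ₁ - ρ₂) * ((1 + ρ₁) * (1 + ρ₃) - (ρ₁ + ρ₂) ^ 2) := by
  ring

lemma gamma_denominator_eq :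
    1 + 2*ρ₁^2*ρ₂ - ρ₂^2 - 2*ρ₁^2 = (1 - ρ₂) * (1 + ρ₂ - 2 * ρ₁ ^ 2) := by
  ring

end GammaAlgebra

theorem gamma42_gt_gamma43 (H ρ₁ ρ₂ ρ₃ : ℝ) (hH : H ∈ Set.Ioo (1/2 : ℝ) 1)
    (h1 : ρ₁ = (1/2) * ((2:ℝ) ^ (2*H) - 2 * (1:ℝ) ^ (2*H) + (0:ℝ) ^ (2*H)))
    (h2 : ρ₂ = (1/2) * ((3:ℝ) ^ (2*H) - 2 * (2:ℝ) ^ (2*H) + (1:ℝ) ^ (2*H)))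
    (h3 : ρ₃ = (1/2) * ((4:ℝ) ^ (2*H) - 2 * (3:ℝ) ^ (2*H) + (2:ℝ) ^ (2*H))) :
    ((ρ₁ + ρ₁^2*ρ₃ + ρ₁*ρ₂^2 - ρ₂*ρ₃ - ρ₁^3 - ρ₁*ρ₂)
      - (ρ₁^2*ρ₂ - ρ₂^3 + ρ₁*ρ₂*ρ₃ - ρ₁^2 + ρ₂ - ρ₁*ρ₃)
      = (ρ₁-ρ₂)*(1+ρ₃)*(1-ρ₂) + (ρ₁^2-ρ₂^2)*(1-ρ₁-ρ₂+ρ₃)) ∧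
    ρ₁ + ρ₁^2*ρ₃ + ρ₁*ρ₂^2 - ρ₂*ρ₃ - ρ₁^3 - ρ₁*ρ₂
      > ρ₁^2*ρ₂ - ρ₂^3 + ρ₁*ρ₂*ρ₃ - ρ₁^2 + ρ₂ - ρ₁*ρ₃ ∧
    (ρ₁ + ρ₁^2*ρ₃ + ρ₁*ρ₂^2 - ρ₂*ρ₃ - ρ₁^3 - ρ₁*ρ₂) /
        (1 + 2*ρ₁^2*ρ₂ - ρ₂^2 - 2*ρ₁^2)
      > (ρ₁^2*ρ₂ - ρ₂^3 + ρ₁*ρ₂*ρ₃ - ρ₁^2 + ρ₂ - ρ₁*ρ₃) /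
        (1 + 2*ρ₁^2*ρ₂ - ρ₂^2 - 2*ρ₁^2) := by
  obtain ⟨hH₀, hH₁⟩ := hH
  set u : ℝ := 2 ^ H
  set v : ℝ := 3 ^ H
  have hu : 1 < u := one_lt_rpow (by norm_num) (by linarith)
  have hv : 1 < v := one_lt_rpow (by norm_num) (by linarith)
  have hu₂ : u < 2 := by simpa using rpow_lt_rpow_of_exponent_lt one_lt_two hH₁
  have h4 : (4 : ℝ) ^ H = u ^ 2 := by rw [rpow_pow_comm zero_le_two]; norm_num
  have e1 : ρ₁ = (u ^ 2 - 2) / 2 := by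
    rw [h1, rpow_two_mul zero_le_two, one_rpow, zero_rpow (by positivity)]; ring
  have e2 : ρ₂ = (v ^ 2 - 2 * u ^ 2 + 1) / 2 := by
    rw [h2, rpow_two_mul zero_le_two, rpow_two_mul zero_le_three, one_rpow]; ring
  have e3 : ρ₃ = (u ^ 4 - 2 * v ^ 2 + u ^ 2) / 2 := by
    rw [h3, rpow_two_mul zero_le_two, rpow_two_mul zero_le_three, rpow_two_mul zero_le_four, h4]
    ring
  have hρ : ρ₂ < ρ₁ := by
    rw [e1, e2]; linarith [three_rpow_sq_add_three_lt hH₀ hH₁]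
  have hB : 0 < (1 + ρ₁) * (1 + ρ₃) - (ρ₁ + ρ₂) ^ 2 := by
    have hsq : (v ^ 2 - 1) ^ 2 < (u ^ 3) ^ 2 :=
      sq_lt_sq' (by nlinarith) (by linarith [three_rpow_sq_lt_two_rpow_cube_add_one hH₁])
    rw [e1, e2, e3]; linarith
  have hD : 0 < 1 + 2*ρ₁^2*ρ₂ - ρ₂^2 - 2*ρ₁^2 := by
    have hsq : (u ^ 2 - 1) ^ 2 < v ^ 2 :=
      sq_lt_sq' (by nlinarith) (by linarith [two_rpow_sq_lt_three_rpow_add_one hH₁])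
    rw [gamma_denominator_eq]
    have hρ₁ : ρ₁ < 1 := by rw [e1]; nlinarith
    exact mul_pos (by linarith) (by rw [e1, e2]; linarith)
  have hgt := sub_pos.1 ((gamma_numerator_sub_eq ρ₁ ρ₂ ρ₃).symm ▸ mul_pos (sub_pos.2 hρ) hB)
  exact ⟨by ring, hgt, div_lt_div_of_pos_right hgt hD⟩
end

section
/- For y ∈ (0,1/2), one has the power series expansions (1+y)^{2H} + (1-y)^{2H} - 2 = Σ_{k≥0} c_k y^{2k+2} and (1+2y)^{2H} + (1-2y)^{2H} - 2 = Σ_{k≥0} c_k (2y)^{2k+2}, where c_k = 2·(2H)(2H-1)⋯(2H-2k-1)/(2k+2)!, and the function η(H,y) = ((1+2y)^{2H} + (1-2y)^{2H} - 2)/((1+y)^{2H} + (1-y)^{2H} - 2) is strictly increasing in y on (0,1/2) for every H ∈ (1/2,1). -/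
/-!
Both expansions are the even part of the binomial series of `(1 + x) ^ (2H)`, taken at `x = ±y`
and `x = ±2y`, and for `1 < 2H < 2` every `c k` is positive. With `g y = ∑ c k y ^ (2k+2)`,
expanding the Cauchy products and pairing the `(j, k)` and `(k, j)` terms gives
`2 (g (2t) g s - g (2s) g t) = ∑ c j c k (2^m - 2^n) (t^m s^n - s^m t^n)` with `m = 2j+2`,
`n = 2k+2`; for `s < t` the two factors have the same sign, strictly so when `m ≠ n`.
-/

open Finset Set

theorem Ring.choose_eq_prod_range_div_factorial {K : Type*} [Field K] [CharZero K] (a : K)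
    (n : ℕ) : Ring.choose a n = (∏ i ∈ range n, (a - i)) / n.factorial := by
  rw [Ring.choose_eq_smul, ← descPochhammer_eval_eq_prod_range, smul_eq_mul, inv_mul_eq_div,
    ← descPochhammer_map (algebraMap ℤ K), Polynomial.eval_map_algebraMap,
    Polynomial.aeval_eq_smeval]

theorem Real.hasSum_choose_mul_pow (a : ℝ) {x : ℝ} (hx : |x| < 1) :
    HasSum (fun n ↦ Ring.choose a n * x ^ n) ((1 + x) ^ a) := by
  have := Real.one_add_rpow_hasFPowerSeriesOnBall_zero (a := a) |>.hasSum
    (y := x) (by simpa [edist_dist, Real.dist_eq] using hx)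
  simpa [binomialSeries, FormalMultilinearSeries.ofScalars_apply_eq, mul_comm] using this

theorem HasSum.comp_two_mul_of_odd_eq_zero {α : Type*} [AddCommMonoid α] [TopologicalSpace α]
    {f : ℕ → α} {s : α} (hf : HasSum f s) (hodd : ∀ n, Odd n → f n = 0) :
    HasSum (fun k ↦ f (2 * k)) s := by
  refine (Function.Injective.hasSum_iff (fun m n h ↦ by simpa using h) fun n hn ↦ ?_).mpr hf
  exact hodd n (Nat.not_even_iff_odd.mp fun ⟨k, hk⟩ ↦ hn ⟨k, by omega⟩)

theorem HasSum.add_neg_pow {R : Type*} [CommRing R] [TopologicalSpace R] [ContinuousAdd R]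
    {b : ℕ → R} {x s t : R} (hs : HasSum (fun n ↦ b n * x ^ n) s)
    (ht : HasSum (fun n ↦ b n * (-x) ^ n) t) :
    HasSum (fun k ↦ 2 * b (2 * k) * x ^ (2 * k)) (s + t) := by
  refine ((hs.add ht).comp_two_mul_of_odd_eq_zero fun n hn ↦ ?_).congr_fun fun k ↦ ?_
  · rw [hn.neg_pow]; ring
  · simp only [(even_two_mul k).neg_pow]; ring

theorem Real.hasSum_one_add_rpow_add_one_sub_rpow (a : ℝ) {x : ℝ} (hx : |x| < 1) :
    HasSum (fun k ↦ 2 * Ring.choose a (2 * k + 2) * x ^ (2 * k + 2))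
      ((1 + x) ^ a + (1 - x) ^ a - 2) := by
  have h := (hasSum_choose_mul_pow a hx).add_neg_pow
    (by simpa [← sub_eq_add_neg] using hasSum_choose_mul_pow a (x := -x) (by rwa [abs_neg]))
  simpa [mul_add] using (hasSum_nat_add_iff' 1).mpr h

theorem prod_range_two_mul_add_two_sub_pos {a : ℝ} (h1 : 1 < a) (h2 : a < 2) (k : ℕ) :
    0 < ∏ i ∈ range (2 * k + 2), (a - i) := by
  induction k with
  | zero => simpa [prod_range_succ] using mul_pos (by linarith : 0 < a) (by linarith : 0 < a - 1)
  | succ k ih =>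
    rw [show 2 * (k + 1) + 2 = 2 * k + 2 + 1 + 1 by ring, prod_range_succ, prod_range_succ,
      mul_assoc]
    refine mul_pos ih (mul_pos_of_neg_of_neg ?_ ?_) <;> push_cast <;> linarith

section PowerRatio

variable {l s t : ℝ}

theorem pow_sub_pow_mul_sub_nonneg (hl : 1 ≤ l) (hs : 0 ≤ s) (hst : s ≤ t) (m n : ℕ) :
    0 ≤ (l ^ m - l ^ n) * (t ^ m * s ^ n - s ^ m * t ^ n) := by
  wlog hnm : n ≤ m generalizing m n
  · convert this n m (by omega) using 1; ring
  obtain ⟨d, rfl⟩ := Nat.exists_eq_add_of_le hnm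
  calc (0 : ℝ) ≤ l ^ n * (s * t) ^ n * ((l ^ d - 1) * (t ^ d - s ^ d)) :=
        mul_nonneg (mul_nonneg (by bound) (pow_nonneg (mul_nonneg hs (hs.trans hst)) n)) <|
          mul_nonneg (sub_nonneg.2 (one_le_pow₀ hl)) (sub_nonneg.2 (pow_le_pow_left₀ hs hst d))
    _ = _ := by ring

theorem pow_sub_pow_mul_sub_pos (hl : 1 < l) (hs : 0 < s) (hst : s < t) {m n : ℕ}
    (hmn : m ≠ n) : 0 < (l ^ m - l ^ n) * (t ^ m * s ^ n - s ^ m * t ^ n) := by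
  wlog hnm : n < m generalizing m n
  · convert this hmn.symm (by omega) using 1; ring
  obtain ⟨d, rfl⟩ := Nat.exists_eq_add_of_le hnm.le
  have hd : d ≠ 0 := by omega
  calc (0 : ℝ) < l ^ n * (s * t) ^ n * ((l ^ d - 1) * (t ^ d - s ^ d)) :=
        mul_pos (mul_pos (by bound) (pow_pos (mul_pos hs (hs.trans hst)) n)) <|
          mul_pos (sub_pos.2 (one_lt_pow₀ hl hd)) (sub_pos.2 (pow_lt_pow_left₀ hst hs.le hd))
    _ = _ := by ring

end PowerRatio

theorem HasSum.pos_of_nonneg {ι : Type*} {f : ι → ℝ} {s : ℝ} (hf : HasSum f s) (h : 0 ≤ f)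
    {i : ι} (hi : 0 < f i) : 0 < s :=
  hasSum_lt h hi hasSum_zero hf

theorem strictMonoOn_div_of_hasSum_pow {a : ℕ → ℝ} {e : ℕ → ℕ} {l : ℝ} {S : Set ℝ}
    {F G : ℝ → ℝ} (hl : 1 < l) (hS : S ⊆ Ioi 0) (ha : 0 ≤ a) {i j : ℕ} (hij : e i ≠ e j)
    (hi : 0 < a i) (hj : 0 < a j) (hG : ∀ x ∈ S, HasSum (fun n ↦ a n * x ^ e n) (G x))
    (hF : ∀ x ∈ S, HasSum (fun n ↦ a n * (l * x) ^ e n) (F x)) :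
    StrictMonoOn (fun x ↦ F x / G x) S := by
  have term_nonneg : ∀ {x : ℝ}, 0 ≤ x → 0 ≤ fun n ↦ a n * x ^ e n :=
    fun hx n ↦ mul_nonneg (ha n) (pow_nonneg hx _)
  have hGpos : ∀ x ∈ S, 0 < G x := fun x hx ↦
    (hG x hx).pos_of_nonneg (term_nonneg (hS hx).le) (mul_pos hi (pow_pos (hS hx) (e i)))
  intro s hs t ht hst
  rw [div_lt_div_iff₀ (hGpos s hs) (hGpos t ht)]
  set D : ℕ × ℕ → ℝ := fun p ↦ a p.1 * a p.2 *
    ((l ^ e p.1 - l ^ e p.2) * (t ^ e p.1 * s ^ e p.2 - s ^ e p.1 * t ^ e p.2))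
  have hD : HasSum D (2 * (F t * G s - F s * G t)) := by
    have hprod : ∀ {x y}, x ∈ S → y ∈ S → HasSum
        (fun p : ℕ × ℕ ↦ a p.1 * (l * x) ^ e p.1 * (a p.2 * y ^ e p.2)) (F x * G y) :=
      fun {x y} hx hy ↦ by
        have hsum := Summable.mul_of_nonneg (hF x hx).summable (hG y hy).summable
          (term_nonneg (mul_nonneg (by linarith) (hS hx).le)) (term_nonneg (hS hy).le)
        exact (hF x hx).mul (hG y hy) hsum
    have hsymm : ∀ {x y}, x ∈ S → y ∈ S → HasSum
        (fun p : ℕ × ℕ ↦ a p.1 * (l * x) ^ e p.1 * (a p.2 * y ^ e p.2) +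
          a p.2 * (l * x) ^ e p.2 * (a p.1 * y ^ e p.1)) (2 * (F x * G y)) := fun hx hy ↦ by
      rw [two_mul]
      exact (hprod hx hy).add ((Equiv.prodComm ℕ ℕ).hasSum_iff.mpr (hprod hx hy))
    rw [mul_sub]
    refine ((hsymm ht hs).sub (hsymm hs ht)).congr_fun fun p ↦ ?_
    simp only [D, mul_pow]
    ring
  have hDpos : 0 < 2 * (F t * G s - F s * G t) :=
    hD.pos_of_nonneg (fun p ↦ mul_nonneg (mul_nonneg (ha _) (ha _))
      (pow_sub_pow_mul_sub_nonneg hl.le (hS hs).le hst.le _ _)) (i := (i, j))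
      (mul_pos (mul_pos hi hj) (pow_sub_pow_mul_sub_pos hl (hS hs) hst hij))
  linarith

theorem eta_series_and_monotone (H : ℝ) (hH : H ∈ Set.Ioo (1/2 : ℝ) 1)
    (c : ℕ → ℝ)
    (hc : ∀ k : ℕ, c k = 2 * (∏ i ∈ Finset.range (2*k+2), (2*H - (i:ℝ))) /
            (Nat.factorial (2*k+2)))
    (η : ℝ → ℝ)
    (hη : ∀ y : ℝ, η y =
      ((1+2*y) ^ (2*H) + (1-2*y) ^ (2*H) - 2) / ((1+y) ^ (2*H) + (1-y) ^ (2*H) - 2)) :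
    (∀ y ∈ Set.Ioo (0:ℝ) (1/2),
       HasSum (fun k : ℕ => c k * y^(2*k+2)) ((1+y) ^ (2*H) + (1-y) ^ (2*H) - 2) ∧
       HasSum (fun k : ℕ => c k * (2*y)^(2*k+2)) ((1+2*y) ^ (2*H) + (1-2*y) ^ (2*H) - 2)) ∧
    StrictMonoOn η (Set.Ioo (0:ℝ) (1/2)) := by
  obtain ⟨hH1, hH2⟩ := hH
  have hc_choose : ∀ k, c k = 2 * Ring.choose (2 * H) (2 * k + 2) := fun k ↦ by
    rw [hc, Ring.choose_eq_prod_range_div_factorial, mul_div_assoc]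
  have hseries : ∀ x : ℝ, |x| < 1 →
      HasSum (fun k ↦ c k * x ^ (2 * k + 2)) ((1 + x) ^ (2 * H) + (1 - x) ^ (2 * H) - 2) :=
    fun x hx ↦ by simpa only [hc_choose] using Real.hasSum_one_add_rpow_add_one_sub_rpow _ hx
  have hseries_Ioo : ∀ y ∈ Ioo (0 : ℝ) (1 / 2), _ ∧ _ := fun y ⟨hy0, hy1⟩ ↦
    ⟨hseries y (abs_lt.2 ⟨by linarith, by linarith⟩),
      hseries (2 * y) (abs_lt.2 ⟨by linarith, by linarith⟩)⟩
  refine ⟨hseries_Ioo, ?_⟩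
  have hc_pos : ∀ k, 0 < c k := fun k ↦ by
    rw [hc]
    exact div_pos (mul_pos two_pos (prod_range_two_mul_add_two_sub_pos (by linarith)
      (by linarith) k)) (Nat.cast_pos.2 (Nat.factorial_pos _))
  rw [show η = _ from funext hη]
  exact strictMonoOn_div_of_hasSum_pow (e := fun k ↦ 2 * k + 2) (i := 0) (j := 1) one_lt_two
    (fun _ hy ↦ hy.1) (fun k ↦ (hc_pos k).le) (by norm_num) (hc_pos 0) (hc_pos 1)
    (fun y hy ↦ (hseries_Ioo y hy).1) (fun y hy ↦ (hseries_Ioo y hy).2)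
end
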